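/- arXiv:1809.03989 — 3 statements merged into one kernel-verified Lean document; each statement's English description precedes it below -/
import Mathlib

section
/- No overcrowding (Lemma 2.16): fix β > 0 and a bounded Borel set Λ ⊆ ℝ. For every ε > 0 there exists p₀ (depending on β, Λ, ε) such that for every integer p ≥ p₀ and every integer n ≥ p with Λ ⊆ Λ_n, one has Q_{n,β}({x ∈ Λ_n^n : N_Λ(x) ≤ p and N_{Λ_p}(x) ≤ p²}) ≥ 1 − ε. -/
open MeasureTheory Real Filter Topology
open scoped ENNReal Classical BigOperators

noncomputable section

/-- `Lam m` is the interval `Λ_m = [-m/2, m/2]`. -/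
def Lam (m : ℝ) : Set ℝ := Set.Icc (-(m / 2)) (m / 2)

/-- The `n`-periodic logarithmic potential `g_n`. -/
def gper (n : ℕ) (x : ℝ) : ℝ :=
  if Real.sin (Real.pi * x / n) ≠ 0 then -Real.log |2 * Real.sin (Real.pi * x / n)| else 0

/-- The logarithmic potential `g`. -/
def glog (x : ℝ) : ℝ := if x ≠ 0 then -Real.log |x| else 0

/-- Pair interaction energy `Σ_{j<ℓ} φ(η_j - η_ℓ)`. -/
def pairE (φ : ℝ → ℝ) {N : ℕ} (η : Fin N → ℝ) : ℝ :=
  ∑ j : Fin N, ∑ l ∈ Finset.Ioi j, φ (η j - η l)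

/-- The cube `Λ_m^n`. -/
def cube (n : ℕ) (m : ℝ) : Set (Fin n → ℝ) := Set.pi Set.univ fun _ => Lam m

/-- Partition function of the periodic log-gas (as an extended nonnegative real). -/
def QZ (β : ℝ) (n : ℕ) : ℝ≥0∞ :=
  ∫⁻ x in cube n n, ENNReal.ofReal (Real.exp (-β * pairE (gper n) x))

/-- The probability measure `Q_{n,β}` of the periodic log-gas. -/
def Qmeas (β : ℝ) (n : ℕ) : Measure (Fin n → ℝ) :=
  (QZ β n)⁻¹ •
    ((volume.restrict (cube n n)).withDensity fun x =>
      ENNReal.ofReal (Real.exp (-β * pairE (gper n) x)))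

/-- Indices of the coordinates of `x` lying in `B`. -/
def inIdx (B : Set ℝ) {n : ℕ} (x : Fin n → ℝ) : Finset (Fin n) :=
  Finset.univ.filter fun i => x i ∈ B

/-- `N_B(x)`, the number of coordinates of `x` lying in `B`. -/
def NIn (B : Set ℝ) {n : ℕ} (x : Fin n → ℝ) : ℕ := (inIdx B x).card

/-- Replace the coordinates of `x` lying in `Λ` by `η`, in increasing order of index. -/
def replaceIn (Λ : Set ℝ) {n : ℕ} (x : Fin n → ℝ) (η : Fin (NIn Λ x) → ℝ) : Fin n → ℝ :=
  fun i =>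
    if h : x i ∈ Λ then
      η (((inIdx Λ x).orderIsoOfFin rfl).symm ⟨i, by simp [inIdx, h]⟩)
    else x i

/-- Move function `M_{Λ,Λp}(η, x)` with interaction `φ`. -/
def moveF (φ : ℝ → ℝ) (Λ Λp : Set ℝ) {n : ℕ} (x : Fin n → ℝ) {N : ℕ} (η : Fin N → ℝ) : ℝ :=
  (∑ j : Fin N, ∑ i ∈ inIdx (Λp \ Λ) x, φ (η j - x i))
    - ∑ i ∈ inIdx Λ x, ∑ i' ∈ inIdx (Λp \ Λ) x, φ (x i - x i')

/-- Gibbs kernel `f_{Λ,Λp}` with interaction `φ` at inverse temperature `β`. -/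
def gibbsK (φ : ℝ → ℝ) (β : ℝ) (Λ Λp : Set ℝ) {n : ℕ}
    (f : (Fin n → ℝ) → ℝ) (x : Fin n → ℝ) : ℝ :=
  (∫ η in Set.pi Set.univ (fun _ : Fin (NIn Λ x) => Λ),
      f (replaceIn Λ x η) * Real.exp (-β * (pairE φ η + moveF φ Λ Λp x η)))
    / ∫ η in Set.pi Set.univ (fun _ : Fin (NIn Λ x) => Λ),
        Real.exp (-β * (pairE φ η + moveF φ Λ Λp x η))


/-!
Since `g_n` is `n`-periodic, `Q_{n,β}` is invariant under translating all particles by the same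
amount modulo `n`. Averaging over these translations shows that the expected number of particles
in a Borel set `B` is `|B ∩ Λ_n| ≤ |B|`. Markov's inequality then bounds the probability of
`N_Λ > p` by `|Λ| / p` and that of `N_{Λ_p} > p²` by `|Λ_p| / p² = 1 / p`, and
`(|Λ| + 1) / p → 0`.
-/

open Set Function

lemma gper_periodic (n : ℕ) : Periodic (gper n) n := by
  intro x
  rcases eq_or_ne (n : ℝ) 0 with hn | hn
  · rw [hn, add_zero]
  have harg : π * (x + n) / n = π * x / n + π := by field_simp
  simp only [gper, harg, sin_add_pi, mul_neg, abs_neg, neg_ne_zero]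

lemma neg_log_two_le_gper (n : ℕ) (y : ℝ) : -log 2 ≤ gper n y := by
  unfold gper
  split_ifs with h
  · have hle : |2 * sin (π * y / n)| ≤ 2 := by
      rw [abs_mul, abs_two]
      nlinarith [abs_sin_le_one (π * y / n)]
    have := log_le_log (abs_pos.2 (mul_ne_zero two_ne_zero h)) hle
    linarith
  · linarith [log_pos (one_lt_two : (1 : ℝ) < 2)]

lemma measurable_gper (n : ℕ) : Measurable (gper n) := by
  have hsin : Measurable fun x : ℝ => sin (π * x / n) := by fun_prop
  refine Measurable.ite (hsin (measurableSet_singleton 0).compl) ?_ measurable_const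
  exact (measurable_log.comp (measurable_const.mul hsin).abs).neg

section Torus

variable {L : ℝ} (hL : 0 < L)

lemma measurable_toIocMod (a : ℝ) : Measurable (toIocMod hL a) := by
  have : Fact (0 < L) := ⟨hL⟩
  have : toIocMod hL a = fun y : ℝ => (AddCircle.equivIoc L a y : ℝ) := by
    funext y
    simp only [AddCircle.equivIoc, QuotientAddGroup.equivIocMod_coe]
  rw [this]
  exact measurable_subtype_coe.comp
    ((AddCircle.measurableEquivIoc L a).measurable.comp AddCircle.measurable_mk')

lemma measurePreserving_toIocMod_add (a b c : ℝ) :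
    MeasurePreserving (fun t => toIocMod hL a (c + t))
      (volume.restrict (Ioc b (b + L))) (volume.restrict (Ioc a (a + L))) := by
  have : Fact (0 < L) := ⟨hL⟩
  have hval : MeasurePreserving (Subtype.val : Ioc a (a + L) → ℝ)
      (Measure.comap Subtype.val volume) (volume.restrict (Ioc a (a + L))) :=
    ⟨measurable_subtype_coe, map_comap_subtype_coe measurableSet_Ioc _⟩
  have hcircle := ((hval.comp (AddCircle.measurePreserving_equivIoc L)).comp
    (measurePreserving_add_left volume (c : AddCircle L))).comp
    (AddCircle.measurePreserving_mk L b)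
  convert hcircle using 1
  funext t
  simp only [comp_apply, ← AddCircle.coe_add, AddCircle.equivIoc,
    QuotientAddGroup.equivIocMod_coe]

/-- The diagonal translation by `t` on the torus `(a, a + L]ⁿ`. -/
def torusRotate (a t : ℝ) {n : ℕ} (x : Fin n → ℝ) : Fin n → ℝ :=
  fun i => toIocMod hL a (x i + t)

lemma measurePreserving_torusRotate (a t : ℝ) (n : ℕ) :
    MeasurePreserving (torusRotate hL a t)
      (Measure.pi fun _ : Fin n => volume.restrict (Ioc a (a + L)))
      (Measure.pi fun _ : Fin n => volume.restrict (Ioc a (a + L))) := by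
  convert measurePreserving_pi _ _ fun _ : Fin n => measurePreserving_toIocMod_add hL a a t
    using 1
  funext x i
  simp only [torusRotate, add_comm]

end Torus

lemma MeasureTheory.MeasurePreserving.withDensity_of_comp_eq {α : Type*} [MeasurableSpace α]
    {μ : Measure α} {T : α → α} (hT : MeasurePreserving T μ μ) {f : α → ℝ≥0∞}
    (hf : Measurable f) (hfT : ∀ x, f (T x) = f x) :
    MeasurePreserving T (μ.withDensity f) (μ.withDensity f) := by
  refine ⟨hT.measurable, Measure.ext fun s hs => ?_⟩
  rw [Measure.map_apply hT.measurable hs, withDensity_apply _ (hT.measurable hs),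
    withDensity_apply _ hs, ← hT.setLIntegral_comp_preimage hs hf]
  simp only [hfT]

section pairE

variable {φ : ℝ → ℝ} {N : ℕ}

lemma measurable_pairE (hφ : Measurable φ) : Measurable fun η : Fin N → ℝ => pairE φ η := by
  unfold pairE
  fun_prop

lemma pow_two_mul_le_pairE {c : ℝ} (hc : c ≤ 0) (hφ : ∀ y, c ≤ φ y) (η : Fin N → ℝ) :
    (N : ℝ) ^ 2 * c ≤ pairE φ η := by
  have hrow : ∀ j : Fin N, (N : ℝ) * c ≤ ∑ l ∈ Finset.Ioi j, φ (η j - η l) := by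
    intro j
    have hcard : ((Finset.Ioi j).card : ℝ) ≤ N := by
      exact_mod_cast (Finset.card_le_univ _).trans_eq (Finset.card_fin N)
    calc (N : ℝ) * c ≤ (Finset.Ioi j).card * c := mul_le_mul_of_nonpos_right hcard hc
      _ ≤ _ := by
        simpa only [nsmul_eq_mul] using
          Finset.card_nsmul_le_sum (Finset.Ioi j) _ c fun l _ => hφ (η j - η l)
  calc (N : ℝ) ^ 2 * c = ∑ _j : Fin N, (N : ℝ) * c := by simp; ring
    _ ≤ pairE φ η := Finset.sum_le_sum fun j _ => hrow j

lemma pairE_torusRotate {L : ℝ} (hφ : Periodic φ L) (hL : 0 < L) (a t : ℝ) (η : Fin N → ℝ) :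
    pairE φ (torusRotate hL a t η) = pairE φ η := by
  refine Finset.sum_congr rfl fun j _ => Finset.sum_congr rfl fun l _ => ?_
  have : toIocMod hL a (η j + t) - toIocMod hL a (η l + t)
      = η j - η l + (toIocDiv hL a (η l + t) - toIocDiv hL a (η j + t)) • L := by
    simp only [toIocMod, sub_smul]
    abel
  simp only [torusRotate, this]
  exact hφ.zsmul _ _

end pairE

section NIn

variable {B : Set ℝ} {n : ℕ}

lemma NIn_eq_sum_indicator (B : Set ℝ) (x : Fin n → ℝ) :
    (NIn B x : ℝ≥0∞) = ∑ i, B.indicator 1 (x i) := by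
  simp only [NIn, inIdx, Finset.card_filter, Nat.cast_sum]
  refine Finset.sum_congr rfl fun i _ => ?_
  by_cases h : x i ∈ B <;> simp [h]

lemma measurable_NIn (hB : MeasurableSet B) :
    Measurable fun x : Fin n → ℝ => (NIn B x : ℝ≥0∞) := by
  simp only [NIn_eq_sum_indicator]
  exact Finset.measurable_sum _ fun i _ =>
    (measurable_one.indicator hB).comp (measurable_pi_apply i)

variable {L : ℝ} (hL : 0 < L) (a : ℝ)

lemma setLIntegral_NIn_torusRotate (hB : MeasurableSet B) (x : Fin n → ℝ) :
    ∫⁻ t in Ioc 0 L, (NIn B (torusRotate hL a t x) : ℝ≥0∞) = n * volume (B ∩ Ioc a (a + L)) := by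
  have hcoord : ∀ i, ∫⁻ t in Ioc 0 L, B.indicator 1 (toIocMod hL a (x i + t))
      = volume (B ∩ Ioc a (a + L)) := fun i => by
    have h := (measurePreserving_toIocMod_add hL a 0 (x i)).lintegral_comp
      (measurable_one.indicator hB)
    rwa [zero_add, lintegral_indicator_one hB, Measure.restrict_apply hB] at h
  simp only [NIn_eq_sum_indicator, torusRotate]
  rw [lintegral_finsetSum]
  · simp [hcoord]
  · exact fun i _ => (measurable_one.indicator hB).comp
      ((measurable_toIocMod hL a).comp (measurable_const.add measurable_id))

lemma ofReal_mul_lintegral_NIn {μ : Measure (Fin n → ℝ)} [SFinite μ]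
    (hμ : ∀ t, MeasurePreserving (torusRotate hL a t) μ μ) (hB : MeasurableSet B) :
    ENNReal.ofReal L * ∫⁻ x, NIn B x ∂μ = n * volume (B ∩ Ioc a (a + L)) * μ univ := by
  have hjoint :
      Measurable fun q : ℝ × (Fin n → ℝ) => (NIn B (torusRotate hL a q.1 q.2) : ℝ≥0∞) := by
    simp only [NIn_eq_sum_indicator, torusRotate]
    exact Finset.measurable_sum _ fun i _ => (measurable_one.indicator hB).comp
      ((measurable_toIocMod hL a).comp
        (((measurable_pi_apply i).comp measurable_snd).add measurable_fst))
  calc ENNReal.ofReal L * ∫⁻ x, NIn B x ∂μ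
      = ∫⁻ t in Ioc 0 L, (∫⁻ x, NIn B (torusRotate hL a t x) ∂μ) := by
        simp only [(hμ _).lintegral_comp (measurable_NIn hB)]
        rw [setLIntegral_const, Real.volume_Ioc, sub_zero, mul_comm]
    _ = ∫⁻ x, (∫⁻ t in Ioc 0 L, NIn B (torusRotate hL a t x)) ∂μ :=
        lintegral_lintegral_swap hjoint.aemeasurable
    _ = n * volume (B ∩ Ioc a (a + L)) * μ univ := by
        simp only [setLIntegral_NIn_torusRotate hL a hB, lintegral_const]

end NIn

section Qmeas

variable {β : ℝ} {n : ℕ}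

lemma measurable_gibbsDensity (β : ℝ) (n : ℕ) :
    Measurable fun x : Fin n → ℝ => ENNReal.ofReal (exp (-β * pairE (gper n) x)) :=
  ((measurable_pairE (measurable_gper n)).const_mul _).exp.ennreal_ofReal

lemma volume_restrict_cube (n : ℕ) :
    volume.restrict (cube n n)
      = Measure.pi fun _ : Fin n => volume.restrict (Ioc (-(n / 2 : ℝ)) (-(n / 2) + n)) := by
  rw [cube, volume_pi, Measure.restrict_pi_pi, show -(n / 2 : ℝ) + n = n / 2 by ring]
  exact congrArg Measure.pi (funext fun _ => (Measure.restrict_congr_set Ioc_ae_eq_Icc).symm)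

lemma measurePreserving_Qmeas_torusRotate (β : ℝ) (hn : 0 < (n : ℝ)) (t : ℝ) :
    MeasurePreserving (torusRotate hn (-(n / 2)) t) (Qmeas β n) (Qmeas β n) := by
  have h := (measurePreserving_torusRotate hn (-(n / 2)) t n).withDensity_of_comp_eq
    (measurable_gibbsDensity β n) fun x => by rw [pairE_torusRotate (gper_periodic n)]
  rw [Qmeas, volume_restrict_cube]
  exact ⟨h.measurable, by rw [Measure.map_smul, h.map_eq]⟩

lemma QZ_ne_zero (β : ℝ) (n : ℕ) : QZ β n ≠ 0 := by
  have hsupp : support (fun x : Fin n → ℝ => ENNReal.ofReal (exp (-β * pairE (gper n) x)))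
      = univ := support_eq_univ fun x => by simp [exp_pos]
  rw [QZ, ← pos_iff_ne_zero, lintegral_pos_iff_support (measurable_gibbsDensity β n), hsupp,
    Measure.restrict_apply_univ, pos_iff_ne_zero, cube, volume_pi_pi, Finset.prod_ne_zero_iff]
  intro i _
  rw [Lam, Real.volume_Icc, Ne, ENNReal.ofReal_eq_zero, not_le]
  have : (0 : ℝ) < n := Nat.cast_pos.2 i.pos
  linarith

lemma QZ_ne_top (hβ : 0 ≤ β) (n : ℕ) : QZ β n ≠ ∞ := by
  set C := ENNReal.ofReal (exp (β * (n ^ 2 * log 2)))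
  have hbound : ∀ x : Fin n → ℝ, ENNReal.ofReal (exp (-β * pairE (gper n) x)) ≤ C := fun x => by
    have h := pow_two_mul_le_pairE (neg_nonpos.2 (log_nonneg one_le_two))
      (neg_log_two_le_gper n) x
    refine ENNReal.ofReal_le_ofReal (exp_le_exp.2 ?_)
    nlinarith
  have hcube : volume (cube n n) < ∞ := (isCompact_univ_pi fun _ => isCompact_Icc).measure_lt_top
  refine (lt_of_le_of_lt (setLIntegral_mono measurable_const fun x _ => hbound x) ?_).ne
  rw [setLIntegral_const]
  exact ENNReal.mul_lt_top ENNReal.ofReal_lt_top hcube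

lemma isProbabilityMeasure_Qmeas (hβ : 0 ≤ β) (n : ℕ) : IsProbabilityMeasure (Qmeas β n) := by
  constructor
  rw [Qmeas, Measure.smul_apply, withDensity_apply _ MeasurableSet.univ, Measure.restrict_univ,
    smul_eq_mul]
  exact ENNReal.inv_mul_cancel (QZ_ne_zero β n) (QZ_ne_top hβ n)

lemma ae_mem_cube_Qmeas (β : ℝ) (n : ℕ) : ∀ᵐ x ∂Qmeas β n, x ∈ cube n n :=
  Measure.ae_smul_measure (withDensity_absolutelyContinuous _ _
    (ae_restrict_mem (MeasurableSet.univ_pi fun _ => measurableSet_Icc))) _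

lemma lintegral_NIn_Qmeas (hβ : 0 ≤ β) (hn : 0 < n) {B : Set ℝ} (hB : MeasurableSet B) :
    ∫⁻ x, NIn B x ∂Qmeas β n = volume (B ∩ Lam n) := by
  have hn' : (0 : ℝ) < n := Nat.cast_pos.2 hn
  have := isProbabilityMeasure_Qmeas hβ n
  have h := ofReal_mul_lintegral_NIn hn' _ (measurePreserving_Qmeas_torusRotate β hn') hB
  rw [measure_univ, mul_one, ENNReal.ofReal_natCast,
    ENNReal.mul_right_inj (Nat.cast_ne_zero.2 hn.ne') (ENNReal.natCast_ne_top n)] at h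
  rw [h, show -(n / 2 : ℝ) + n = n / 2 by ring]
  exact measure_congr ((ae_eq_refl B).inter Ioc_ae_eq_Icc)

lemma Qmeas_setOf_le_NIn_le (hβ : 0 ≤ β) (hn : 0 < n) {B : Set ℝ} (hB : MeasurableSet B) {k : ℕ}
    (hk : k ≠ 0) : Qmeas β n {x | k ≤ NIn B x} ≤ volume B / k := by
  have h := meas_ge_le_lintegral_div (μ := Qmeas β n) (measurable_NIn hB).aemeasurable
    (Nat.cast_ne_zero.2 hk) (ENNReal.natCast_ne_top k)
  simp only [Nat.cast_le] at h
  refine h.trans (ENNReal.div_le_div_right ?_ _)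
  rw [lintegral_NIn_Qmeas hβ hn hB]
  exact measure_mono inter_subset_left

end Qmeas

lemma volume_Lam_natCast (p : ℕ) : volume (Lam p) = p := by
  rw [Lam, Real.volume_Icc, show (p / 2 : ℝ) - -(p / 2) = p by ring, ENNReal.ofReal_natCast]

lemma Qmeas_compl_noOvercrowding_le {β : ℝ} (hβ : 0 ≤ β) {Λ : Set ℝ} (hΛ : MeasurableSet Λ)
    {p n : ℕ} (hp : 1 ≤ p) (hn : 0 < n) :
    Qmeas β n {x : Fin n → ℝ | (∀ i, x i ∈ Lam n) ∧ NIn Λ x ≤ p ∧ NIn (Lam p) x ≤ p ^ 2}ᶜ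
      ≤ (volume Λ + 1) * (p : ℝ≥0∞)⁻¹ := by
  have hp0 : (p : ℝ≥0∞) ≠ 0 := Nat.cast_ne_zero.2 (by omega)
  have hLam : volume (Lam p) / (p ^ 2 : ℕ) = (p : ℝ≥0∞)⁻¹ := by
    rw [volume_Lam_natCast, Nat.cast_pow, pow_two, ENNReal.div_eq_inv_mul,
      ENNReal.mul_inv (Or.inl hp0) (Or.inl (ENNReal.natCast_ne_top p)), mul_assoc,
      ENNReal.inv_mul_cancel hp0 (ENNReal.natCast_ne_top p), mul_one]
  have hsub : ∀ᵐ x ∂Qmeas β n, x ∈ {x : Fin n → ℝ | (∀ i, x i ∈ Lam n) ∧ NIn Λ x ≤ p ∧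
      NIn (Lam p) x ≤ p ^ 2}ᶜ → x ∈ {x | p ≤ NIn Λ x} ∪ {x | p ^ 2 ≤ NIn (Lam p) x} := by
    filter_upwards [ae_mem_cube_Qmeas β n] with x hx hxE
    simp only [mem_compl_iff, mem_ofPred_eq, not_and_or, not_le] at hxE
    rcases hxE with hxE | hxE | hxE
    · exact absurd (mem_univ_pi.1 hx) hxE
    · exact Or.inl hxE.le
    · exact Or.inr hxE.le
  calc _ ≤ Qmeas β n {x | p ≤ NIn Λ x} + Qmeas β n {x | p ^ 2 ≤ NIn (Lam p) x} :=
        (measure_mono_ae hsub).trans (measure_union_le _ _)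
    _ ≤ volume Λ / p + volume (Lam p) / (p ^ 2 : ℕ) :=
        add_le_add (Qmeas_setOf_le_NIn_le hβ hn hΛ (by omega))
          (Qmeas_setOf_le_NIn_le hβ hn measurableSet_Icc (by positivity))
    _ = (volume Λ + 1) * (p : ℝ≥0∞)⁻¹ := by rw [hLam, div_eq_mul_inv, add_mul, one_mul]

/-- **No overcrowding** (Lemma 2.16). -/
theorem no_overcrowding
    (β : ℝ) (hβ : 0 < β) (Λ : Set ℝ) (hΛmeas : MeasurableSet Λ)
    (hΛbdd : Bornology.IsBounded Λ) (ε : ℝ) (hε : 0 < ε) :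
    ∃ p₀ : ℕ, ∀ p : ℕ, p₀ ≤ p → ∀ n : ℕ, p ≤ n → Λ ⊆ Lam n →
      1 - ENNReal.ofReal ε ≤
        Qmeas β n {x : Fin n → ℝ | (∀ i, x i ∈ Lam n) ∧
          NIn Λ x ≤ p ∧ NIn (Lam p) x ≤ p ^ 2} := by
  have hC : volume Λ + 1 ≠ ∞ := ENNReal.add_ne_top.2 ⟨hΛbdd.measure_lt_top.ne, ENNReal.one_ne_top⟩
  obtain ⟨p₀, hp₀⟩ := eventually_atTop.1 <|
    ((ENNReal.Tendsto.const_mul ENNReal.tendsto_inv_nat_nhds_zero (Or.inr hC)).eventually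
      (ge_mem_nhds (by rw [mul_zero]; exact ENNReal.ofReal_pos.2 hε))).and (eventually_ge_atTop 1)
  refine ⟨p₀, fun p hp n hpn _ => tsub_le_iff_right.2 ?_⟩
  obtain ⟨hpε, hp1⟩ := hp₀ p hp
  have hn : 0 < n := hp1.trans hpn
  have := isProbabilityMeasure_Qmeas hβ.le n
  calc 1 = Qmeas β n univ := measure_univ.symm
    _ ≤ _ := measure_univ_le_add_compl _
    _ ≤ _ := add_le_add_right
        ((Qmeas_compl_noOvercrowding_le hβ.le hΛmeas hp1 hn).trans hpε) _

end
end

section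
/- Electrostatic potential of a point move, part (a) of Lemma 2.26: let k > 0 and Λ = [−k, k]. For every ε > 0 there exists p₀ > 0 (depending on k and ε) such that for all p ≥ p₀, all integers M ≥ 1, and all points γ_1, …, γ_M, η_1, …, η_M ∈ Λ, one has |∫_{−p/2}^{p/2} Ψ(s) ds| ≤ ε · W₁. -/
open MeasureTheory Real Filter Topology Set
open scoped ENNReal Classical BigOperators

noncomputable section

/-- `Ψ(s) = Σ_i (log|s - γ_i| - log|s - η_i|)`. -/
def Psi {M : ℕ} (γ η : Fin M → ℝ) (s : ℝ) : ℝ :=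
  ∑ i, (Real.log |s - γ i| - Real.log |s - η i|)

/-- `Ψ_n(s) = Σ_i (g_n(s - η_i) - g_n(s - γ_i))`. -/
def Psin (n : ℕ) {M : ℕ} (γ η : Fin M → ℝ) (s : ℝ) : ℝ :=
  ∑ i, (gper n (s - η i) - gper n (s - γ i))

/-- `W₁`, the minimal matching cost between the tuples `γ` and `η`. -/
def W1 {M : ℕ} (γ η : Fin M → ℝ) : ℝ :=
  ⨅ σ : Equiv.Perm (Fin M), ∑ i, |γ i - η (σ i)|


/-! The integral of `log |s - c|` over `[-P, P]` is a function of `c` whose derivative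
`log (P + c) - log (P - c)` is at most `log ((P + k) / (P - k))` in absolute value on `[-k, k]`,
and this tends to `0` as `P → ∞`. So the integral of `Ψ` is a sum of differences of an
`ε`-Lipschitz function at the points `γ i` and `η (σ i)`, for any matching `σ`; choosing an
optimal matching bounds it by `ε W₁`. -/

lemma integral_log_sub (a b c : ℝ) :
    ∫ s in a..b, log (s - c) = (b - c) * log (b - c) - (a - c) * log (a - c) - (b - a) := by
  rw [intervalIntegral.integral_comp_sub_right (fun x => log x) c, integral_log]
  ring

lemma hasDerivAt_integral_log_sub {a b c : ℝ} (ha : a - c ≠ 0) (hb : b - c ≠ 0) :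
    HasDerivAt (fun c => ∫ s in a..b, log (s - c)) (log (a - c) - log (b - c)) c := by
  simp_rw [integral_log_sub]
  have hsub (d : ℝ) : HasDerivAt (fun c : ℝ => d - c) (-1) c := by
    simpa using (hasDerivAt_id c).const_sub d
  have hb' := (hasDerivAt_mul_log hb).comp c (hsub b)
  have ha' := (hasDerivAt_mul_log ha).comp c (hsub a)
  exact ((hb'.sub ha').sub_const (b - a)).congr_deriv (by ring)

lemma abs_log_neg_sub_sub_log_sub_le {P k c : ℝ} (hkP : k < P) (hc : c ∈ Icc (-k) k) :
    |log (-P - c) - log (P - c)| ≤ log (P + k) - log (P - k) := by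
  obtain ⟨hkc, hck⟩ := hc
  rw [show -P - c = -(P + c) by ring, log_neg_eq_log, abs_sub_le_iff]
  have hlow {x : ℝ} (hx : P - k ≤ x) : log (P - k) ≤ log x := log_le_log (by linarith) hx
  have hup {x : ℝ} (hx0 : 0 < x) (hx : x ≤ P + k) : log x ≤ log (P + k) := log_le_log hx0 hx
  constructor
  · linarith [hup (x := P + c) (by linarith) (by linarith), hlow (x := P - c) (by linarith)]
  · linarith [hup (x := P - c) (by linarith) (by linarith), hlow (x := P + c) (by linarith)]

lemma abs_integral_log_sub_sub_le {P k x y : ℝ} (hkP : k < P) (hx : x ∈ Icc (-k) k)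
    (hy : y ∈ Icc (-k) k) :
    |(∫ s in -P..P, log (s - x)) - ∫ s in -P..P, log (s - y)|
      ≤ (log (P + k) - log (P - k)) * |x - y| := by
  have hderiv : ∀ c ∈ Icc (-k) k, HasDerivWithinAt (fun c => ∫ s in -P..P, log (s - c))
      (log (-P - c) - log (P - c)) (Icc (-k) k) c := fun c hc =>
    (hasDerivAt_integral_log_sub (by linarith [hc.1]) (by linarith [hc.2])).hasDerivWithinAt
  simpa only [Real.norm_eq_abs] using
    (convex_Icc (-k) k).norm_image_sub_le_of_norm_hasDerivWithin_le hderiv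
      (fun c hc => abs_log_neg_sub_sub_log_sub_le hkP hc) hy hx

lemma exists_log_add_sub_log_sub_le {k ε : ℝ} (hk : 0 < k) (hε : 0 < ε) :
    ∃ P₀ > 0, ∀ P ≥ P₀, k < P ∧ log (P + k) - log (P - k) ≤ ε := by
  have hE : 0 < exp ε - 1 := sub_pos.2 (one_lt_exp_iff.2 hε)
  refine ⟨k * (exp ε + 1) / (exp ε - 1), by positivity, fun P hP => ?_⟩
  -- `P ≥ P₀` says exactly `P + k ≤ exp ε * (P - k)`.
  have hP' : k * (exp ε + 1) ≤ P * (exp ε - 1) := (div_le_iff₀ hE).1 hP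
  have hkP : k < P := by nlinarith
  refine ⟨hkP, ?_⟩
  have := log_le_log (by linarith) (show P + k ≤ exp ε * (P - k) by linarith)
  rw [log_mul (exp_pos ε).ne' (by linarith), log_exp] at this
  linarith

lemma exists_perm_W1_eq {M : ℕ} (γ η : Fin M → ℝ) :
    ∃ σ : Equiv.Perm (Fin M), W1 γ η = ∑ i, |γ i - η (σ i)| := by
  obtain ⟨σ, hσ⟩ :=
    Finite.exists_min fun σ : Equiv.Perm (Fin M) => ∑ i, |γ i - η (σ i)|
  exact ⟨σ, le_antisymm (ciInf_le (Finite.bddBelow_range _) σ) (le_ciInf hσ)⟩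

lemma W1_nonneg {M : ℕ} (γ η : Fin M → ℝ) : 0 ≤ W1 γ η :=
  Real.iInf_nonneg fun _ => Finset.sum_nonneg fun _ _ => abs_nonneg _

lemma abs_sum_sub_le_mul_W1 {M : ℕ} {F : ℝ → ℝ} {S : Set ℝ} {L : ℝ}
    (hF : ∀ x ∈ S, ∀ y ∈ S, |F x - F y| ≤ L * |x - y|) {γ η : Fin M → ℝ}
    (hγ : ∀ i, γ i ∈ S) (hη : ∀ i, η i ∈ S) :
    |∑ i, (F (γ i) - F (η i))| ≤ L * W1 γ η := by
  obtain ⟨σ, hσ⟩ := exists_perm_W1_eq γ η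
  have hmatch : ∑ i, (F (γ i) - F (η i)) = ∑ i, (F (γ i) - F (η (σ i))) := by
    rw [Finset.sum_sub_distrib, Finset.sum_sub_distrib, Equiv.sum_comp σ (fun i => F (η i))]
  calc |∑ i, (F (γ i) - F (η i))|
      ≤ ∑ i, |F (γ i) - F (η (σ i))| := hmatch ▸ Finset.abs_sum_le_sum_abs _ _
    _ ≤ ∑ i, L * |γ i - η (σ i)| := Finset.sum_le_sum fun i _ => hF _ (hγ i) _ (hη (σ i))
    _ = L * W1 γ η := by rw [← Finset.mul_sum, hσ]

lemma integral_Icc_Psi {a b : ℝ} (hab : a ≤ b) {M : ℕ} (γ η : Fin M → ℝ) :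
    ∫ s in Icc a b, Psi γ η s
      = ∑ i, ((∫ s in a..b, log (s - γ i)) - ∫ s in a..b, log (s - η i)) := by
  have hint (c : ℝ) : IntervalIntegrable (fun s => log (s - c)) volume a b :=
    by
    simpa using
      (intervalIntegral.intervalIntegrable_log' (a := a - c) (b := b - c)).comp_sub_right c
  rw [integral_Icc_eq_integral_Ioc, ← intervalIntegral.integral_of_le hab]
  simp only [Psi, log_abs]
  rw [intervalIntegral.integral_finsetSum fun i _ => (hint (γ i)).sub (hint (η i))]
  exact Finset.sum_congr rfl fun i _ => intervalIntegral.integral_sub (hint (γ i)) (hint (η i))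

/-- **Electrostatic potential of a point move, part (a) of Lemma 2.26**. -/
theorem move_potential_a
    (k : ℝ) (hk : 0 < k) (ε : ℝ) (hε : 0 < ε) :
    ∃ p₀ : ℝ, 0 < p₀ ∧ ∀ p : ℝ, p₀ ≤ p →
      ∀ M : ℕ, 1 ≤ M → ∀ γ η : Fin M → ℝ,
        (∀ i, γ i ∈ Set.Icc (-k) k) → (∀ i, η i ∈ Set.Icc (-k) k) →
        |∫ s in Set.Icc (-(p / 2)) (p / 2), Psi γ η s| ≤ ε * W1 γ η := by
  obtain ⟨P₀, hP₀, hP⟩ := exists_log_add_sub_log_sub_le hk hε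
  refine ⟨2 * P₀, by positivity, fun p hp M _ γ η hγ hη => ?_⟩
  obtain ⟨hkP, hlog⟩ := hP (p / 2) (by linarith)
  rw [integral_Icc_Psi (by linarith)]
  calc _ ≤ (log (p / 2 + k) - log (p / 2 - k)) * W1 γ η :=
        abs_sum_sub_le_mul_W1 (fun x hx y hy => abs_integral_log_sub_sub_le hkP hx hy) hγ hη
    _ ≤ ε * W1 γ η := mul_le_mul_of_nonneg_right hlog (W1_nonneg γ η)

end
end

section
/- Existence and positivity of the exterior weight (deterministic content of part (B) of Theorems 1.1 and 2.1): let a > 0 and let γ ⊂ ℝ be a locally finite set with γ ∩ (−a, a) = ∅, and let μ be the counting measure of γ. Assume that (i) D_μ(t)/t → 0 and D̃_μ(t)/t → 0 as t → ∞, and (ii) Σ_{j ≥ 1} |D_μ((j+1)/2)| / j² < ∞ and Σ_{j ≥ 1} |D̃_μ((j+1)/2)| / j² < ∞. Then for every x ∈ (−a, a), the limit lim_{p → ∞} Σ_{u ∈ γ, |u| ≤ p} log|1 − x/u| exists and is a finite real number; consequently, for every β > 0 the limit ω(x) := lim_{p → ∞} ∏_{u ∈ γ, |u| ≤ p} |1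 − x/u|^β exists and is a strictly positive real number. -/
/-!
Cut the window `|u| ≤ p` at the nodes `t_j = (j + 2) / 2` into blocks `t_j < ±u ≤ t_{j+1}`.
Since `log |1 - x/u| = -x/u + O(u⁻²)`, a block on the positive side contributes
`-x N_j / t_{j+1} + O(N_j / t_j²)`, where `N_j = 1/2 + D(t_{j+1}) - D(t_j)` is its number of
points, and symmetrically on the negative side with `+x` and `D̃`. The contributions
`∓x / (2 t_{j+1})` of the two sides cancel, the terms `x ΔD / t` telescope, up to
`O(|D(t_j)| / t_j²)`, to `x (D̃ - D)(t_j) / t_j → 0`, and all errors are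
`O((1 + |D(t_j)| + |D(t_{j+1})|) / t_j²)`, summable by (ii). So the sums converge along the
nodes, and between two nodes they move by at most `N_j · O(1 / t_j) → 0` by (i).
Exponentiating gives the weight `ω = exp (β L) > 0`.
-/

open Real Filter Topology
open scoped BigOperators

open Set Asymptotics

namespace ExteriorWeight

/-- The sample points `(j + 1) / 2`, `j ≥ 1`, of the paper, reindexed from `0`. -/
noncomputable def node (j : ℕ) : ℝ := ((j : ℝ) + 2) / 2

noncomputable def discrepancy (S : Set ℝ) (t : ℝ) : ℝ := ((S ∩ Ioc 0 t).ncard : ℝ) - t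

lemma one_le_node (j : ℕ) : 1 ≤ node j := by
  rw [node, le_div_iff₀ two_pos]
  linarith [(j.cast_nonneg : (0 : ℝ) ≤ j)]

lemma node_pos (j : ℕ) : 0 < node j := one_pos.trans_le (one_le_node j)

lemma node_succ (j : ℕ) : node (j + 1) = node j + 1 / 2 := by
  rw [node, node]; push_cast; ring

lemma node_le_node_succ (j : ℕ) : node j ≤ node (j + 1) := by
  rw [node_succ]; linarith

lemma tendsto_node_atTop : Tendsto node atTop atTop :=
  (tendsto_natCast_atTop_atTop.atTop_add tendsto_const_nhds).atTop_div_const two_pos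

lemma inv_sub_inv_node_succ_le {u : ℝ} {j : ℕ} (hu : u ∈ Icc (node j) (node (j + 1))) :
    0 ≤ u⁻¹ - (node (j + 1))⁻¹ ∧ u⁻¹ - (node (j + 1))⁻¹ ≤ (node j ^ 2)⁻¹ := by
  have ht := one_le_node j
  have hu0 : 0 < u := by linarith [hu.1]
  rw [node_succ] at hu ⊢
  rw [inv_sub_inv hu0.ne' (by linarith)]
  refine ⟨div_nonneg (by linarith [hu.2]) (by positivity), ?_⟩
  rw [div_le_iff₀ (by positivity), inv_mul_eq_div, le_div_iff₀ (by positivity)]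
  nlinarith [hu.1, hu.2]

lemma abs_sub_div_node_succ_le {y c K u : ℝ} {j : ℕ} (hK : 0 ≤ K)
    (hu : u ∈ Ioc (node j) (node (j + 1))) (hy : |y - c / u| ≤ K / u ^ 2) :
    |y - c / node (j + 1)| ≤ (K + |c|) * (node j ^ 2)⁻¹ := by
  have hinv := inv_sub_inv_node_succ_le (Ioc_subset_Icc_self hu)
  have ht := node_pos j
  calc |y - c / node (j + 1)| = |(y - c / u) + c * (u⁻¹ - (node (j + 1))⁻¹)| := by
        congr 1; ring
    _ ≤ |y - c / u| + |c * (u⁻¹ - (node (j + 1))⁻¹)| := abs_add_le _ _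
    _ = |y - c / u| + |c| * (u⁻¹ - (node (j + 1))⁻¹) := by rw [abs_mul, abs_of_nonneg hinv.1]
    _ ≤ K / node j ^ 2 + |c| * (node j ^ 2)⁻¹ := by
        refine add_le_add (hy.trans ?_) (mul_le_mul_of_nonneg_left hinv.2 (abs_nonneg c))
        exact div_le_div_of_nonneg_left hK (by positivity) (pow_le_pow_left₀ ht.le hu.1.le 2)
    _ = (K + |c|) * (node j ^ 2)⁻¹ := by ring

lemma abs_le_div_node {y c K u : ℝ} {j : ℕ} (hK : 0 ≤ K) (hu : node j < u)
    (hy : |y - c / u| ≤ K / u ^ 2) :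
    |y| ≤ (K + |c|) / node j := by
  have ht := one_le_node j
  have hu0 : 0 < u := by linarith
  calc |y| = |(y - c / u) + c / u| := by ring_nf
    _ ≤ |y - c / u| + |c / u| := abs_add_le _ _
    _ ≤ K / u + |c| / u := by
        rw [abs_div, abs_of_pos hu0]
        exact add_le_add (hy.trans (div_le_div_of_nonneg_left hK hu0 (by nlinarith))) le_rfl
    _ ≤ (K + |c|) / node j := by
        rw [← add_div]; exact div_le_div_of_nonneg_left (by positivity) (node_pos j) hu.le

lemma abs_finsum_mem_sub_ncard_mul_le {α : Type*} {s : Set α} (hs : s.Finite) {f : α → ℝ}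
    {a C : ℝ} (h : ∀ u ∈ s, |f u - a| ≤ C) :
    |∑ᶠ u ∈ s, f u - s.ncard * a| ≤ s.ncard * C := by
  rw [finsum_mem_eq_finite_toFinset_sum _ hs, Set.ncard_eq_toFinset_card _ hs, ← nsmul_eq_mul,
    ← Finset.sum_const, ← Finset.sum_sub_distrib, ← nsmul_eq_mul]
  exact (Finset.abs_sum_le_sum_abs _ _).trans
    (Finset.sum_le_card_nsmul _ _ _ fun u hu => h u (hs.mem_toFinset.1 hu))

lemma exists_tendsto_of_summable_sub {G : Type*} [AddCommGroup G] [TopologicalSpace G]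
    [IsTopologicalAddGroup G] {r : ℕ → G} (h : Summable fun j => r (j + 1) - r j) :
    ∃ L, Tendsto r atTop (𝓝 L) := by
  obtain ⟨W, hW⟩ := h
  refine ⟨r 0 + W, ?_⟩
  simpa only [Finset.sum_range_sub, add_sub_cancel] using hW.tendsto_sum_nat.const_add (r 0)

lemma summable_one_add_abs_add_abs_div_node_sq {D : ℕ → ℝ}
    (hD : Summable fun j : ℕ => |D j| / ((j : ℝ) + 1) ^ 2) :
    Summable fun j => (1 + |D j| + |D (j + 1)|) / node j ^ 2 := by
  have hinv : Summable fun j : ℕ => 1 / ((j : ℝ) + 1) ^ 2 :=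
    ((summable_nat_add_iff 1).2 (Real.summable_one_div_nat_pow.2 one_lt_two)).congr fun j => by
      push_cast; rfl
  have hshift : Summable fun j : ℕ => |D (j + 1)| / ((j : ℝ) + 2) ^ 2 :=
    ((summable_nat_add_iff 1).2 hD).congr fun j => by push_cast; ring
  refine (((hinv.add hD).add hshift).mul_left 4).of_nonneg_of_le (fun j => by positivity)
    fun j => ?_
  calc (1 + |D j| + |D (j + 1)|) / node j ^ 2
      = 4 * ((1 + |D j|) / ((j : ℝ) + 2) ^ 2 + |D (j + 1)| / ((j : ℝ) + 2) ^ 2) := by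
        rw [node]; field_simp; ring
    _ ≤ 4 * ((1 + |D j|) / ((j : ℝ) + 1) ^ 2 + |D (j + 1)| / ((j : ℝ) + 2) ^ 2) := by
        gcongr; linarith
    _ = 4 * (1 / ((j : ℝ) + 1) ^ 2 + |D j| / ((j : ℝ) + 1) ^ 2
          + |D (j + 1)| / ((j : ℝ) + 2) ^ 2) := by ring

section OneSided

variable {S : Set ℝ} {g : ℝ → ℝ} {c : ℝ}

lemma ncard_inter_Ioc_node_succ (hS : ∀ p, (S ∩ Ioc 0 p).Finite) (j : ℕ) :
    ((S ∩ Ioc (node j) (node (j + 1))).ncard : ℝ)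
      = 1 / 2 + discrepancy S (node (j + 1)) - discrepancy S (node j) := by
  have hunion : S ∩ Ioc 0 (node (j + 1))
      = S ∩ Ioc 0 (node j) ∪ S ∩ Ioc (node j) (node (j + 1)) := by
    rw [← inter_union_distrib_left, Ioc_union_Ioc_eq_Ioc (node_pos j).le (node_le_node_succ j)]
  have hdisj : Disjoint (S ∩ Ioc 0 (node j)) (S ∩ Ioc (node j) (node (j + 1))) :=
    (Ioc_disjoint_Ioc_of_le le_rfl).mono inter_subset_right inter_subset_right
  have hcard := ncard_union_eq hdisj ((hS _).subset (hunion ▸ subset_union_left))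
    ((hS _).subset (hunion ▸ subset_union_right))
  rw [← hunion] at hcard
  rw [discrepancy, discrepancy, hcard, node_succ]
  push_cast
  ring

lemma exists_abs_sub_div_le_of_isBigO
    (hg : (fun u => g u - c / u) =O[atTop] fun u => 1 / u ^ 2) :
    ∃ K T : ℝ, 0 ≤ K ∧ ∀ u, T ≤ u → |g u - c / u| ≤ K / u ^ 2 := by
  obtain ⟨K, hK, hKg⟩ := hg.exists_nonneg
  obtain ⟨T, hT⟩ := eventually_atTop.1 (hKg.bound.and (eventually_gt_atTop 0))
  refine ⟨K, T, hK, fun u hu => ?_⟩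
  obtain ⟨hbound, hu⟩ := hT u hu
  rwa [Real.norm_eq_abs, Real.norm_eq_abs, abs_of_pos (one_div_pos.2 (pow_pos hu 2)),
    mul_one_div] at hbound

theorem summable_finsum_Ioc_node_sub (hS : ∀ p, (S ∩ Ioc 0 p).Finite)
    (hDsum : Summable fun j : ℕ => |discrepancy S (node j)| / ((j : ℝ) + 1) ^ 2)
    (hg : (fun u => g u - c / u) =O[atTop] fun u => 1 / u ^ 2) :
    Summable fun j => ∑ᶠ u ∈ S ∩ Ioc (node j) (node (j + 1)), g u - c / (2 * node (j + 1))
      - c * (discrepancy S (node (j + 1)) / node (j + 1) - discrepancy S (node j) / node j) := by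
  obtain ⟨K, T, hK, hKT⟩ := exists_abs_sub_div_le_of_isBigO hg
  set D := fun j => discrepancy S (node j)
  refine ((summable_one_add_abs_add_abs_div_node_sq hDsum).mul_left (K + 2 * |c|))
    |>.of_norm_bounded_eventually_nat ?_
  filter_upwards [tendsto_node_atTop.eventually_ge_atTop T] with j hj
  set t := node j
  set t' := node (j + 1)
  set B := S ∩ Ioc t t'
  have hpoint : ∀ u ∈ B, |g u - c / t'| ≤ (K + |c|) * (t ^ 2)⁻¹ := fun u hu =>
    abs_sub_div_node_succ_le hK hu.2 (hKT u (hj.trans hu.2.1.le))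
  have hblock := abs_finsum_mem_sub_ncard_mul_le ((hS t').subset
    (inter_subset_inter_right _ (Ioc_subset_Ioc_left (node_pos j).le))) hpoint
  rw [ncard_inter_Ioc_node_succ hS j] at hblock
  have hinv := inv_sub_inv_node_succ_le (left_mem_Icc.2 (node_le_node_succ j))
  have hcount : 1 / 2 + D (j + 1) - D j ≤ 1 + |D j| + |D (j + 1)| := by
    linarith [le_abs_self (D (j + 1)), neg_abs_le (D j)]
  rw [Real.norm_eq_abs]
  calc _ = |(∑ᶠ u ∈ B, g u - (1 / 2 + D (j + 1) - D j) * (c / t'))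
        + c * D j * (t⁻¹ - t'⁻¹)| := by
        congr 1; field_simp [(node_pos j).ne', (node_pos (j + 1)).ne']; ring
    _ ≤ (1 / 2 + D (j + 1) - D j) * ((K + |c|) * (t ^ 2)⁻¹) + |c| * |D j| * (t ^ 2)⁻¹ := by
        refine (abs_add_le _ _).trans (add_le_add hblock ?_)
        rw [abs_mul, abs_mul, abs_of_nonneg hinv.1]
        gcongr
        exact hinv.2
    _ ≤ (1 + |D j| + |D (j + 1)|) * ((K + |c|) * (t ^ 2)⁻¹)
          + |c| * (1 + |D j| + |D (j + 1)|) * (t ^ 2)⁻¹ := by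
        gcongr
        linarith [abs_nonneg (D (j + 1))]
    _ = (K + 2 * |c|) * ((1 + |D j| + |D (j + 1)|) / t ^ 2) := by ring

lemma tendsto_ncard_inter_Ioc_node_div (hS : ∀ p, (S ∩ Ioc 0 p).Finite)
    (hDlim : Tendsto (fun j => discrepancy S (node j) / node j) atTop (𝓝 0)) :
    Tendsto (fun j => ((S ∩ Ioc (node j) (node (j + 1))).ncard : ℝ) / node j) atTop
      (𝓝 0) := by
  have hinv : Tendsto (fun j => (node j)⁻¹) atTop (𝓝 0) :=
    tendsto_node_atTop.inv_tendsto_atTop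
  have hlim : Tendsto (fun j => 1 / 2 * (node j)⁻¹
      + discrepancy S (node (j + 1)) / node (j + 1) * (1 + 1 / 2 * (node j)⁻¹)
      - discrepancy S (node j) / node j) atTop (𝓝 (1 / 2 * 0 + 0 * (1 + 1 / 2 * 0) - 0)) :=
    ((hinv.const_mul _).add ((hDlim.comp (tendsto_add_atTop_nat 1)).mul
      ((hinv.const_mul _).const_add 1))).sub hDlim
  rw [show (1 / 2 * 0 + 0 * (1 + 1 / 2 * 0) - 0 : ℝ) = 0 by norm_num] at hlim
  refine hlim.congr fun j => ?_
  rw [ncard_inter_Ioc_node_succ hS j]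
  generalize discrepancy S (node (j + 1)) = d
  have ht := node_pos j
  rw [node_succ]
  field_simp

theorem exists_tendsto_zero_abs_finsum_Ioc_node_le (hS : ∀ p, (S ∩ Ioc 0 p).Finite)
    (hDlim : Tendsto (fun j => discrepancy S (node j) / node j) atTop (𝓝 0))
    (hg : (fun u => g u - c / u) =O[atTop] fun u => 1 / u ^ 2) :
    ∃ ε : ℕ → ℝ, Tendsto ε atTop (𝓝 0) ∧
      ∀ᶠ j in atTop, ∀ p ∈ Icc (node j) (node (j + 1)),
        |∑ᶠ u ∈ S ∩ Ioc (node j) p, g u| ≤ ε j := by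
  obtain ⟨K, T, hK, hKT⟩ := exists_abs_sub_div_le_of_isBigO hg
  refine ⟨fun j => (K + |c|) * (((S ∩ Ioc (node j) (node (j + 1))).ncard : ℝ) / node j),
    by simpa using (tendsto_ncard_inter_Ioc_node_div hS hDlim).const_mul (K + |c|), ?_⟩
  filter_upwards [tendsto_node_atTop.eventually_ge_atTop T] with j hj p hp
  have ht := node_pos j
  have hsub : S ∩ Ioc (node j) p ⊆ S ∩ Ioc (node j) (node (j + 1)) :=
    inter_subset_inter_right _ (Ioc_subset_Ioc_right hp.2)
  have hfin : (S ∩ Ioc (node j) (node (j + 1))).Finite := (hS _).subset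
    (inter_subset_inter_right _ (Ioc_subset_Ioc_left (node_pos j).le))
  have hpoint : ∀ u ∈ S ∩ Ioc (node j) p, |g u - 0| ≤ (K + |c|) / node j := fun u hu => by
    rw [sub_zero]
    exact abs_le_div_node hK hu.2.1 (hKT u (hj.trans hu.2.1.le))
  have hbound := abs_finsum_mem_sub_ncard_mul_le (hfin.subset hsub) hpoint
  rw [mul_zero, sub_zero] at hbound
  calc _ ≤ ((S ∩ Ioc (node j) p).ncard : ℝ) * ((K + |c|) / node j) := hbound
    _ ≤ ((S ∩ Ioc (node j) (node (j + 1))).ncard : ℝ) * ((K + |c|) / node j) := by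
        gcongr
    _ = _ := by ring

end OneSided

lemma tendsto_of_tendsto_comp_node {F : ℝ → ℝ} {L : ℝ} {ε : ℕ → ℝ}
    (hL : Tendsto (F ∘ node) atTop (𝓝 L)) (hε : Tendsto ε atTop (𝓝 0))
    (hosc : ∀ᶠ j in atTop, ∀ p ∈ Icc (node j) (node (j + 1)), |F p - F (node j)| ≤ ε j) :
    Tendsto F atTop (𝓝 L) := by
  set idx : ℝ → ℕ := fun p => ⌊2 * p⌋₊ - 2
  have hidx : Tendsto idx atTop atTop := (tendsto_sub_atTop_nat 2).comp
    (tendsto_nat_floor_atTop.comp (tendsto_id.const_mul_atTop two_pos))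
  have hmem : ∀ᶠ p in atTop, p ∈ Icc (node (idx p)) (node (idx p + 1)) := by
    filter_upwards [eventually_ge_atTop 1] with p hp
    have h2 : 2 ≤ ⌊2 * p⌋₊ := Nat.le_floor (by push_cast; linarith)
    have hcast : ((idx p : ℕ) : ℝ) = ⌊2 * p⌋₊ - 2 := by simp [idx, Nat.cast_sub h2]
    simp only [node, mem_Icc, Nat.cast_add, Nat.cast_one, hcast]
    constructor <;> linarith [Nat.floor_le (by linarith : (0 : ℝ) ≤ 2 * p),
      Nat.lt_floor_add_one (2 * p)]
  have hgap : Tendsto (fun p => F p - F (node (idx p))) atTop (𝓝 0) := by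
    refine squeeze_zero_norm' ?_ (hε.comp hidx)
    filter_upwards [hidx.eventually hosc, hmem] with p h hp using h p hp
  simpa using (hL.comp hidx).add hgap

lemma neg_inter_Ioc (γ : Set ℝ) (q p : ℝ) : -γ ∩ Ioc q p = -(γ ∩ Ico (-p) (-q)) := by
  rw [inter_neg, neg_Ico, neg_neg, neg_neg]

lemma discrepancy_neg (γ : Set ℝ) (t : ℝ) :
    discrepancy (-γ) t = ((γ ∩ Ico (-t) 0).ncard : ℝ) - t := by
  rw [discrepancy, neg_inter_Ioc, ncard_neg, neg_zero]

lemma finsum_mem_abs_le_eq_add {γ : Set ℝ} (hγ : ∀ p, (γ ∩ Icc (-p) p).Finite)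
    (f : ℝ → ℝ) {q p : ℝ} (hq : 0 ≤ q) (hqp : q ≤ p) :
    ∑ᶠ u ∈ {u ∈ γ | |u| ≤ p}, f u = ∑ᶠ u ∈ {u ∈ γ | |u| ≤ q}, f u
      + (∑ᶠ u ∈ γ ∩ Ioc q p, f u + ∑ᶠ u ∈ -γ ∩ Ioc q p, f (-u)) := by
  have hset :
      {u ∈ γ | |u| ≤ p} = {u ∈ γ | |u| ≤ q} ∪ (γ ∩ Ioc q p ∪ -(-γ ∩ Ioc q p)) := by
    ext u
    simp only [Set.mem_ofPred_eq, mem_union, mem_inter_iff, Set.mem_neg, neg_neg, mem_Ioc,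
      abs_le]
    grind
  have hfin : ({u ∈ γ | |u| ≤ q} ∪ (γ ∩ Ioc q p ∪ -(-γ ∩ Ioc q p))).Finite := by
    rw [← hset]; exact (hγ p).subset fun u hu => ⟨hu.1, abs_le.1 hu.2⟩
  have hdisj : Disjoint (γ ∩ Ioc q p) (-(-γ ∩ Ioc q p)) := disjoint_left.2 fun u hu hv => by
    simp only [Set.mem_neg, mem_inter_iff, mem_Ioc] at hu hv
    linarith [hu.2.1, hv.2.1]
  have hdisj' : Disjoint {u ∈ γ | |u| ≤ q} (γ ∩ Ioc q p ∪ -(-γ ∩ Ioc q p)) :=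
    disjoint_left.2 fun u hu hv => by
      simp only [Set.mem_ofPred_eq, mem_union, Set.mem_neg, mem_inter_iff, mem_Ioc,
        abs_le] at hu hv
      rcases hv with hv | hv <;> linarith [hu.2.1, hu.2.2, hv.2.1]
  rw [hset, finsum_mem_union hdisj' (hfin.subset subset_union_left)
    (hfin.subset subset_union_right), finsum_mem_union hdisj
    (hfin.subset (subset_union_left.trans subset_union_right))
    (hfin.subset (subset_union_right.trans subset_union_right)), ← image_neg_eq_neg,
    finsum_mem_image neg_injective.injOn]

theorem exists_tendsto_finsum_abs_le_of_isBigO {γ : Set ℝ} {f : ℝ → ℝ} {c : ℝ}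
    (hγ : ∀ p, (γ ∩ Icc (-p) p).Finite)
    (hDlim : Tendsto (fun j => discrepancy γ (node j) / node j) atTop (𝓝 0))
    (hDlim' : Tendsto (fun j => discrepancy (-γ) (node j) / node j) atTop (𝓝 0))
    (hDsum : Summable fun j : ℕ => |discrepancy γ (node j)| / ((j : ℝ) + 1) ^ 2)
    (hDsum' : Summable fun j : ℕ => |discrepancy (-γ) (node j)| / ((j : ℝ) + 1) ^ 2)
    (hf : (fun u => f u - c / u) =O[atTop] fun u => 1 / u ^ 2)
    (hf' : (fun u => f (-u) - -c / u) =O[atTop] fun u => 1 / u ^ 2) :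
    ∃ L, Tendsto (fun p => ∑ᶠ u ∈ {u ∈ γ | |u| ≤ p}, f u) atTop (𝓝 L) := by
  set F := fun p => ∑ᶠ u ∈ {u ∈ γ | |u| ≤ p}, f u
  have hfin_pos : ∀ p, (γ ∩ Ioc 0 p).Finite := fun p => (hγ p).subset
    (inter_subset_inter_right _ fun u hu => ⟨by linarith [hu.1, hu.2], hu.2⟩)
  have hfin_neg : ∀ p, (-γ ∩ Ioc 0 p).Finite := fun p => by
    rw [neg_inter_Ioc, neg_zero]
    exact ((hγ p).subset
      (inter_subset_inter_right _ fun u hu => ⟨hu.1, by linarith [hu.1, hu.2]⟩)).neg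
  have hsplit : ∀ j p, node j ≤ p → F p - F (node j)
      = ∑ᶠ u ∈ γ ∩ Ioc (node j) p, f u + ∑ᶠ u ∈ -γ ∩ Ioc (node j) p, f (-u) := by
    intro j p hp
    simp only [F]
    rw [finsum_mem_abs_le_eq_add hγ f (node_pos j).le hp]
    ring
  obtain ⟨L, hL⟩ : ∃ L, Tendsto (fun j => F (node j)) atTop (𝓝 L) := by
    -- the `±c / (2 t_{j+1})` main terms of the two sides cancel
    set E := fun j => c * (discrepancy γ (node j) / node j - discrepancy (-γ) (node j) / node j)
    have hE : Tendsto E atTop (𝓝 0) := by simpa using (hDlim.sub hDlim').const_mul c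
    obtain ⟨L, hL⟩ := exists_tendsto_of_summable_sub (r := fun j => F (node j) - E j)
      (((summable_finsum_Ioc_node_sub hfin_pos hDsum hf).add
        (summable_finsum_Ioc_node_sub hfin_neg hDsum' hf')).congr fun j => by
          linear_combination -hsplit j _ (node_le_node_succ j))
    exact ⟨L, by simpa using hL.add hE⟩
  obtain ⟨ε, hε, hεF⟩ := exists_tendsto_zero_abs_finsum_Ioc_node_le hfin_pos hDlim hf
  obtain ⟨ε', hε', hεF'⟩ := exists_tendsto_zero_abs_finsum_Ioc_node_le hfin_neg hDlim' hf'
  refine ⟨L, tendsto_of_tendsto_comp_node hL (by simpa using hε.add hε') ?_⟩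
  filter_upwards [hεF, hεF'] with j hj hj' p hp
  rw [hsplit j p hp.1]
  exact (abs_add_le _ _).trans (add_le_add (hj p hp) (hj' p hp))

lemma isBigO_log_abs_one_sub_div (x : ℝ) :
    (fun u => log |1 - x / u| - -x / u) =O[atTop] fun u => 1 / u ^ 2 := by
  refine IsBigO.of_bound (2 * x ^ 2) ?_
  filter_upwards [eventually_gt_atTop 0, eventually_ge_atTop (2 * |x|)] with u hu hxu
  have hy : |x / u| ≤ 1 / 2 := by
    rw [abs_div, abs_of_pos hu, div_le_iff₀ hu]; linarith
  have hy1 : |x / u| < 1 := hy.trans_lt (by norm_num)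
  have hpos : 0 < 1 - x / u := by linarith [le_abs_self (x / u)]
  have htaylor := Real.abs_log_sub_add_sum_range_le hy1 1
  simp only [Finset.range_one, Finset.sum_singleton, zero_add, pow_one, Nat.cast_zero,
    div_one] at htaylor
  rw [Real.norm_eq_abs, Real.norm_eq_abs, abs_of_pos hpos,
    abs_of_pos (one_div_pos.2 (pow_pos hu 2))]
  calc |log (1 - x / u) - -x / u| = |x / u + log (1 - x / u)| := by ring_nf
    _ ≤ |x / u| ^ 2 / (1 - |x / u|) := htaylor
    _ ≤ |x / u| ^ 2 / (1 / 2) := by gcongr; linarith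
    _ = 2 * x ^ 2 * (1 / u ^ 2) := by rw [sq_abs, div_pow]; ring

lemma finprod_mem_rpow_eq_exp_mul_finsum_log {α : Type*} {s : Set α} (hs : s.Finite)
    {f : α → ℝ} (hf : ∀ u ∈ s, 0 < f u) (β : ℝ) :
    ∏ᶠ u ∈ s, f u ^ β = exp (β * ∑ᶠ u ∈ s, log (f u)) := by
  rw [finprod_mem_eq_finite_toFinset_prod _ hs, finsum_mem_eq_finite_toFinset_sum _ hs,
    Finset.mul_sum, exp_sum]
  exact Finset.prod_congr rfl fun u hu => by
    rw [rpow_def_of_pos (hf u (hs.mem_toFinset.1 hu)), mul_comm]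

end ExteriorWeight

open ExteriorWeight

theorem exterior_weight_exists_general
    (a : ℝ) (γ : Set ℝ)
    (hloc : ∀ K : Set ℝ, IsCompact K → (γ ∩ K).Finite)
    (hdisj : γ ∩ Set.Ioo (-a) a = ∅)
    (hD : Tendsto (fun t : ℝ => (((γ ∩ Set.Ioc 0 t).ncard : ℝ) - t) / t) atTop (nhds 0))
    (hD' : Tendsto (fun t : ℝ => (((γ ∩ Set.Ico (-t) 0).ncard : ℝ) - t) / t) atTop (nhds 0))
    (hS : Summable fun j : ℕ =>
      |((γ ∩ Set.Ioc 0 (((j : ℝ) + 2) / 2)).ncard : ℝ) - ((j : ℝ) + 2) / 2| / ((j : ℝ) + 1) ^ 2)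
    (hS' : Summable fun j : ℕ =>
      |((γ ∩ Set.Ico (-(((j : ℝ) + 2) / 2)) 0).ncard : ℝ) - ((j : ℝ) + 2) / 2| / ((j : ℝ) + 1) ^ 2)
    (x : ℝ) (hx : x ∈ Set.Ioo (-a) a) :
    (∃ L : ℝ, Tendsto (fun p : ℝ => ∑ᶠ u ∈ {u ∈ γ | |u| ≤ p}, Real.log |1 - x / u|)
        atTop (nhds L)) ∧
    ∀ β : ℝ, 0 < β → ∃ ω : ℝ, 0 < ω ∧
      Tendsto (fun p : ℝ => ∏ᶠ u ∈ {u ∈ γ | |u| ≤ p}, |1 - x / u| ^ β)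
        atTop (nhds ω) := by
  have hγ : ∀ p, (γ ∩ Icc (-p) p).Finite := fun p => hloc _ isCompact_Icc
  obtain ⟨L, hL⟩ := exists_tendsto_finsum_abs_le_of_isBigO (c := -x) hγ
    (hD.comp tendsto_node_atTop)
    ((hD'.comp tendsto_node_atTop).congr fun j => by rw [discrepancy_neg]; rfl) hS
    (hS'.congr fun j => by rw [discrepancy_neg]; rfl) (isBigO_log_abs_one_sub_div x)
    ((isBigO_log_abs_one_sub_div (-x)).congr_left fun u => by rw [div_neg, neg_div])
  refine ⟨⟨L, hL⟩, fun β _ => ⟨exp (β * L), exp_pos _, ?_⟩⟩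
  have hx_notin : x ∉ γ := fun hxγ => (hdisj ▸ ⟨hxγ, hx⟩ : x ∈ (∅ : Set ℝ))
  have hpos : ∀ u ∈ γ, 0 < |1 - x / u| := fun u hu => abs_pos.2 <| sub_ne_zero.2 fun h => by
    rcases eq_or_ne u 0 with rfl | hu0
    · simp at h
    · exact hx_notin ((div_eq_one_iff_eq hu0).1 h.symm ▸ hu)
  refine ((continuous_exp.tendsto _).comp (hL.const_mul β)).congr fun p => ?_
  exact (finprod_mem_rpow_eq_exp_mul_finsum_log
    ((hγ p).subset fun u hu => ⟨hu.1, abs_le.1 hu.2⟩) (fun u hu => hpos u hu.1) β).symm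

/-- **Existence and positivity of the exterior weight** (deterministic content of
part (B) of Theorems 1.1 and 2.1): for a locally finite set `γ` avoiding `(-a, a)`
with controlled discrepancies, the limit `lim_p Σ_{u ∈ γ, |u| ≤ p} log|1 - x/u|`
exists and is finite; consequently for every `β > 0` the weight
`ω(x) = lim_p ∏_{u ∈ γ, |u| ≤ p} |1 - x/u|^β` exists and is positive. -/
theorem exterior_weight_exists
    (a : ℝ) (ha : 0 < a) (γ : Set ℝ)
    (hloc : ∀ K : Set ℝ, IsCompact K → (γ ∩ K).Finite)
    (hdisj : γ ∩ Set.Ioo (-a) a = ∅)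
    (hD : Tendsto (fun t : ℝ => (((γ ∩ Set.Ioc 0 t).ncard : ℝ) - t) / t) atTop (nhds 0))
    (hD' : Tendsto (fun t : ℝ => (((γ ∩ Set.Ico (-t) 0).ncard : ℝ) - t) / t) atTop (nhds 0))
    (hS : Summable fun j : ℕ =>
      |((γ ∩ Set.Ioc 0 (((j : ℝ) + 2) / 2)).ncard : ℝ) - ((j : ℝ) + 2) / 2| / ((j : ℝ) + 1) ^ 2)
    (hS' : Summable fun j : ℕ =>
      |((γ ∩ Set.Ico (-(((j : ℝ) + 2) / 2)) 0).ncard : ℝ) - ((j : ℝ) + 2) / 2| / ((j : ℝ) + 1) ^ 2)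
    (x : ℝ) (hx : x ∈ Set.Ioo (-a) a) :
    (∃ L : ℝ, Tendsto (fun p : ℝ => ∑ᶠ u ∈ {u ∈ γ | |u| ≤ p}, Real.log |1 - x / u|)
        atTop (nhds L)) ∧
    ∀ β : ℝ, 0 < β → ∃ ω : ℝ, 0 < ω ∧
      Tendsto (fun p : ℝ => ∏ᶠ u ∈ {u ∈ γ | |u| ≤ p}, |1 - x / u| ^ β)
        atTop (nhds ω) :=
  exterior_weight_exists_general a γ hloc hdisj hD hD' hS hS' x hx
end
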